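/- arXiv:1005.3265 — 6 statements merged into one kernel-verified Lean document; each statement's English description precedes it below -/
import Mathlib

section
/- Suppose p11, p12, p22 are real numbers with p11 > p12, p11 > p22, and p11 + p22 > 2*p12. Then the function f(t1,t2) = (p22 - p12) + (p11 - 2*p12 + p22)*(t1*(t1+t2-1) - (t1+t2)/2) + (1/2)*(p11 - p22)*(t1+t2) on [0,1]×[0,1] is uniquely maximized at (t1,t2) = (1,1), where it attains the value p11 - p12. -/
/-- The population extraction criterion f is uniquely maximized on [0,1]² at (1,1),
attaining the value p11 - p12. -/
theorem stmt_2 (p11 p12 p22 : ℝ)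
    (h1 : p11 > p12) (h2 : p11 > p22) (h3 : p11 + p22 > 2 * p12)
    (f : ℝ → ℝ → ℝ)
    (hf : ∀ t1 t2, f t1 t2 = (p22 - p12)
      + (p11 - 2 * p12 + p22) * (t1 * (t1 + t2 - 1) - (t1 + t2) / 2)
      + (1 / 2) * (p11 - p22) * (t1 + t2)) :
    f 1 1 = p11 - p12 ∧
    (∀ t1 ∈ Set.Icc (0:ℝ) 1, ∀ t2 ∈ Set.Icc (0:ℝ) 1, f t1 t2 ≤ p11 - p12) ∧
    (∀ t1 ∈ Set.Icc (0:ℝ) 1, ∀ t2 ∈ Set.Icc (0:ℝ) 1,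
      f t1 t2 = p11 - p12 → t1 = 1 ∧ t2 = 1) := by
  refine ⟨by rw [hf]; ring, ?_, ?_⟩
  · rintro t1 ⟨h10, h11⟩ t2 ⟨h20, h21⟩
    rw [hf]
    nlinarith [mul_nonneg (sub_nonneg.2 h11) (sub_nonneg.2 h21),
      mul_nonneg h10 (sub_nonneg.2 h21), mul_nonneg h20 (sub_nonneg.2 h11),
      mul_nonneg (sub_nonneg.2 h11) h10, mul_nonneg (sub_nonneg.2 h21) h20,
      mul_nonneg (by linarith : (0:ℝ) ≤ p11 - 2*p12 + p22) (mul_nonneg (sub_nonneg.2 h11) (sub_nonneg.2 h21)),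
      mul_nonneg (by linarith : (0:ℝ) ≤ p11 - 2*p12 + p22) (mul_nonneg (sub_nonneg.2 h11) (mul_nonneg (sub_nonneg.2 h11) (sub_nonneg.2 h21)))]
  · rintro t1 ⟨h10, h11⟩ t2 ⟨h20, h21⟩ heq
    rw [hf] at heq
    have ha : (0:ℝ) < p11 - 2*p12 + p22 := by linarith
    have hb : (0:ℝ) < p11 - p22 := by linarith
    have key : (p11 - 2*p12 + p22) * ((1-t1)*(3/2 - (1-t1) - (1-t2)) + (1-t2)/2)
        + (p11 - p22)/2 * ((1-t1)+(1-t2)) = 0 := by linarith [heq]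
    have hnn : (0:ℝ) ≤ (1-t1)*(3/2 - (1-t1) - (1-t2)) + (1-t2)/2 := by
      nlinarith [mul_nonneg (sub_nonneg.2 h11) (sub_nonneg.2 h21),
        mul_nonneg (sub_nonneg.2 h11) h10, mul_nonneg (sub_nonneg.2 h21) h20,
        mul_nonneg h10 (sub_nonneg.2 h21)]
    have hsum : (1-t1)+(1-t2) ≤ 0 := by nlinarith [mul_nonneg ha.le hnn]
    constructor <;> linarith
end

section
/- Under the hypotheses p11 > p12, p11 > p22, p11 + p22 > 2*p12, for any (t1,t2) ∈ [0,1]×[0,1] with (t1,t2) ≠ (1,1), we have f(t1,t2) < p11 - p12, where f(t1,t2) = (p22 - p12) + (p11 - 2*p12 + p22)*(t1*(t1+t2-1) - (t1+t2)/2) + (1/2)*(p11 - p22)*(t1+t2). -/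
/-- Strict suboptimality of every point other than (1,1) for the population criterion. -/
theorem stmt_3 (p11 p12 p22 t1 t2 : ℝ)
    (h1 : p11 > p12) (h2 : p11 > p22) (h3 : p11 + p22 > 2 * p12)
    (ht1 : t1 ∈ Set.Icc (0:ℝ) 1) (ht2 : t2 ∈ Set.Icc (0:ℝ) 1)
    (hne : (t1, t2) ≠ ((1:ℝ), (1:ℝ))) :
    (p22 - p12) + (p11 - 2 * p12 + p22) * (t1 * (t1 + t2 - 1) - (t1 + t2) / 2)
      + (1 / 2) * (p11 - p22) * (t1 + t2) < p11 - p12 := by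
  obtain ⟨h10, h11⟩ := ht1
  obtain ⟨h20, h21⟩ := ht2
  have hs : t1 + t2 < 2 := by
    rcases lt_or_eq_of_le h11 with h | h
    · linarith
    rcases lt_or_eq_of_le h21 with h' | h'
    · linarith
    · exact absurd (by rw [h, h']) hne
  have key : t1 * (t1 + t2 - 1) ≤ (t1 + t2) / 2 := by
    nlinarith [mul_nonneg h10 h20, sq_nonneg (t1 - t2), mul_nonneg (sub_nonneg.2 h11) (sub_nonneg.2 h21)]
  nlinarith [mul_nonneg (sub_nonneg.2 h3.le) (sub_nonneg.2 key), mul_pos (sub_pos.2 h2) (by linarith : (0:ℝ) < 2 - (t1+t2))]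
end

section
/- Under the conditions 0 < π < 1, p11 > p12, p11 > p22, and p11 + p22 > 2*p12, the function Q(R,P) = (r11²p11 + 2r11r12p12 + r12²p22)/(r11+r12)² − (r11r21p11 + r11r22p12 + r12r21p12 + r12r22p22)/((r11+r12)(r21+r22)) is uniquely maximized over nonnegative 2×2 matrices R with column sums (π, 1−π) and positive row sums by R = diag(π, 1−π). -/
/-!
Write `s = r11 + r12` and `t = r21 + r22` for the row sums of `R`. Clearing denominators gives
`(p11 - p12) - Q(R) = r12 * C / (s² t) + (p11 - p12) * r11 * r21 / (s t)` with
`C = s ((p11 - p12) r22 + (p11 - p22) r21) + (p11 + p22 - 2 p12) r11 t`, which is positive under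
the hypotheses on `P`. Hence `Q(R) ≤ p11 - p12 = Q(diag(π, 1 - π))`, and equality forces
`r12 = 0`, then `r11 = s > 0` and so `r21 = 0`.
-/

noncomputable def criterion (p11 p12 p22 r11 r12 r21 r22 : ℝ) : ℝ :=
  (r11 ^ 2 * p11 + 2 * r11 * r12 * p12 + r12 ^ 2 * p22) / (r11 + r12) ^ 2
    - (r11 * r21 * p11 + r11 * r22 * p12 + r12 * r21 * p12 + r12 * r22 * p22)
      / ((r11 + r12) * (r21 + r22))

def offDiagCoeff (p11 p12 p22 r11 r12 r21 r22 : ℝ) : ℝ :=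
  (r11 + r12) * ((p11 - p12) * r22 + (p11 - p22) * r21)
    + (p11 + p22 - 2 * p12) * r11 * (r21 + r22)

section

variable {p11 p12 p22 r11 r12 r21 r22 : ℝ}

theorem criterion_diag {a b : ℝ} (ha : a ≠ 0) (hb : b ≠ 0) :
    criterion p11 p12 p22 a 0 0 b = p11 - p12 := by
  simp only [criterion, add_zero, zero_add, mul_zero, zero_mul]
  field_simp
  ring

theorem sub_criterion_eq (hs : r11 + r12 ≠ 0) (ht : r21 + r22 ≠ 0) :
    p11 - p12 - criterion p11 p12 p22 r11 r12 r21 r22 =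
      r12 * offDiagCoeff p11 p12 p22 r11 r12 r21 r22 / ((r11 + r12) ^ 2 * (r21 + r22))
        + (p11 - p12) * r11 * r21 / ((r11 + r12) * (r21 + r22)) := by
  unfold criterion offDiagCoeff
  field_simp
  ring

theorem offDiagCoeff_pos (h1 : p11 > p12) (h2 : p11 > p22) (h3 : p11 + p22 > 2 * p12)
    (h11 : 0 ≤ r11) (h21 : 0 ≤ r21) (h22 : 0 ≤ r22)
    (hs : 0 < r11 + r12) (ht : 0 < r21 + r22) :
    0 < offDiagCoeff p11 p12 p22 r11 r12 r21 r22 := by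
  have hrow : 0 < (p11 - p12) * r22 + (p11 - p22) * r21 := by
    rcases h21.eq_or_lt with rfl | h21
    · simpa using mul_pos (sub_pos.2 h1) (by simpa using ht)
    · exact add_pos_of_nonneg_of_pos (mul_nonneg (sub_pos.2 h1).le h22)
        (mul_pos (sub_pos.2 h2) h21)
  have hdiag : 0 ≤ (p11 + p22 - 2 * p12) * r11 * (r21 + r22) :=
    mul_nonneg (mul_nonneg (sub_pos.2 h3).le h11) ht.le
  exact add_pos_of_pos_of_nonneg (mul_pos hs hrow) hdiag

theorem criterion_le
    (h1 : p11 > p12) (h2 : p11 > p22) (h3 : p11 + p22 > 2 * p12)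
    (h11 : 0 ≤ r11) (h12 : 0 ≤ r12) (h21 : 0 ≤ r21) (h22 : 0 ≤ r22)
    (hs : 0 < r11 + r12) (ht : 0 < r21 + r22) :
    criterion p11 p12 p22 r11 r12 r21 r22 ≤ p11 - p12 := by
  have hgap := sub_criterion_eq (p11 := p11) (p12 := p12) (p22 := p22) hs.ne' ht.ne'
  have hC := offDiagCoeff_pos h1 h2 h3 h11 h21 h22 hs ht
  have : 0 ≤ p11 - p12 - criterion p11 p12 p22 r11 r12 r21 r22 := by
    rw [hgap]
    exact add_nonneg (div_nonneg (mul_nonneg h12 hC.le) (by positivity))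
      (div_nonneg (mul_nonneg (mul_nonneg (sub_pos.2 h1).le h11) h21) (by positivity))
  linarith

theorem offDiag_eq_zero_of_criterion_eq
    (h1 : p11 > p12) (h2 : p11 > p22) (h3 : p11 + p22 > 2 * p12)
    (h11 : 0 ≤ r11) (h12 : 0 ≤ r12) (h21 : 0 ≤ r21) (h22 : 0 ≤ r22)
    (hs : 0 < r11 + r12) (ht : 0 < r21 + r22)
    (heq : criterion p11 p12 p22 r11 r12 r21 r22 = p11 - p12) : r12 = 0 ∧ r21 = 0 := by
  have hgap := sub_criterion_eq (p11 := p11) (p12 := p12) (p22 := p22) hs.ne' ht.ne'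
  have hC := offDiagCoeff_pos h1 h2 h3 h11 h21 h22 hs ht
  rw [heq, sub_self, eq_comm, add_eq_zero_iff_of_nonneg
    (div_nonneg (mul_nonneg h12 hC.le) (by positivity))
    (div_nonneg (mul_nonneg (mul_nonneg (sub_pos.2 h1).le h11) h21) (by positivity))] at hgap
  obtain ⟨hleak, hmix⟩ := hgap
  have hr12 : r12 = 0 := by simpa [hC.ne', hs.ne', ht.ne'] using hleak
  subst hr12
  simp only [add_zero] at hs
  simpa [(sub_pos.2 h1).ne', hs.ne', ht.ne'] using hmix

end

/-- The population criterion Q is uniquely maximized over feasible R by diag(π, 1-π). -/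
theorem stmt_7 (π p11 p12 p22 : ℝ)
    (hπ : 0 < π) (hπ1 : π < 1)
    (h1 : p11 > p12) (h2 : p11 > p22) (h3 : p11 + p22 > 2 * p12)
    (Q : ℝ → ℝ → ℝ → ℝ → ℝ)
    (hQ : ∀ r11 r12 r21 r22, Q r11 r12 r21 r22 =
      (r11 ^ 2 * p11 + 2 * r11 * r12 * p12 + r12 ^ 2 * p22) / (r11 + r12) ^ 2
        - (r11 * r21 * p11 + r11 * r22 * p12 + r12 * r21 * p12 + r12 * r22 * p22)
          / ((r11 + r12) * (r21 + r22))) :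
    ∀ r11 r12 r21 r22 : ℝ,
      0 ≤ r11 → 0 ≤ r12 → 0 ≤ r21 → 0 ≤ r22 →
      r11 + r21 = π → r12 + r22 = 1 - π →
      0 < r11 + r12 → 0 < r21 + r22 →
      (Q r11 r12 r21 r22 ≤ Q π 0 0 (1 - π) ∧
        (Q r11 r12 r21 r22 = Q π 0 0 (1 - π) →
          r11 = π ∧ r12 = 0 ∧ r21 = 0 ∧ r22 = 1 - π)) := by
  intro r11 r12 r21 r22 h11 h12 h21 h22 hc1 hc2 hs ht
  have hQ' : ∀ a b c d, Q a b c d = criterion p11 p12 p22 a b c d := hQ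
  simp only [hQ', criterion_diag hπ.ne' (sub_pos.2 hπ1).ne']
  refine ⟨criterion_le h1 h2 h3 h11 h12 h21 h22 hs ht, fun heq => ?_⟩
  obtain ⟨rfl, rfl⟩ := offDiag_eq_zero_of_criterion_eq h1 h2 h3 h11 h12 h21 h22 hs ht heq
  exact ⟨by linarith, rfl, rfl, by linarith⟩
end

section
/- Let h(t1,t2) = ((t1−π)(t2−(1−π))/(t1+t2−1)²) · [ (p22−p12) + (p11−2p12+p22)(t1(t1+t2−1) − (t1+t2)/2) + (1/2)(p11−p22)(t1+t2) ] be defined on D = ([0,π]×[0,1−π] ∪ [π,1]×[1−π,1]) minus the line t1+t2 = 1. Suppose 0 < π < 1, p11 > p12, p11 > p22, and p11 + p22 > 2p12. Then h(t1,t2) < h(1,1) = π(1−π)(p11−p12) for all (t1,t2) ∈ D with (t1,t2) ≠ (1,1). -/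
/-!
Writing `a = t1 - π`, `b = t2 - (1 - π)`, the bracket in `h` equals `(a + b)` times the affine
function `c(t1) = (p11 - 2 p12 + p22) t1 + p12 - p22`, so `h = a b / (a + b) · c(t1)`.
On either box `a` and `b` have a common sign, and the parallel sum `a b / (a + b)` is monotone in
both arguments, so its absolute value is at most `(1 - π) π / ((1 - π) + π) = π (1 - π)`.
Since `c` is increasing, `c ≤ c(1) = p11 - p12` on the upper box and `-c ≤ p22 - p12 < p11 - p12`
on the lower one.
-/

section ParallelSum

variable {a b α β : ℝ}

theorem mul_div_add_le_mul_div_add (ha : 0 ≤ a) (hb : 0 ≤ b) (haα : a ≤ α) (hbβ : b ≤ β)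
    (hab : 0 < a + b) : a * b / (a + b) ≤ α * β / (α + β) := by
  rw [div_le_div_iff₀ hab (by linarith)]
  nlinarith [mul_nonneg (mul_nonneg ha (ha.trans haα)) (sub_nonneg.2 hbβ),
    mul_nonneg (mul_nonneg hb (hb.trans hbβ)) (sub_nonneg.2 haα)]

theorem mul_div_add_lt_mul_div_add (hα : 0 < α) (ha : 0 ≤ a) (hb : 0 ≤ b) (haα : a ≤ α)
    (hbβ : b < β) (hab : 0 < a + b) : a * b / (a + b) < α * β / (α + β) := by
  rw [div_lt_div_iff₀ hab (by linarith)]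
  have hβ : 0 < β := hb.trans_lt hbβ
  rcases ha.eq_or_lt with rfl | ha
  · nlinarith [mul_pos (mul_pos hα hβ) (show 0 < b by linarith)]
  · nlinarith [mul_pos (mul_pos ha hα) (sub_pos.2 hbβ),
      mul_nonneg (mul_nonneg hb hβ.le) (sub_nonneg.2 haα)]

end ParallelSum

theorem mul_lt_mul_of_le_of_le_of_lt_or_lt {g G c κ : ℝ} (hg : 0 ≤ g) (hgG : g ≤ G)
    (hcκ : c ≤ κ) (hG : 0 < G) (hκ : 0 < κ) (hlt : g < G ∨ c < κ) : g * c < G * κ := by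
  rcases le_or_gt c 0 with hc | hc
  · nlinarith [mul_nonpos_of_nonneg_of_nonpos hg hc, mul_pos hG hκ]
  rcases hlt with hlt | hlt
  · exact mul_lt_mul hlt hcκ hc hG.le
  · exact mul_lt_mul' hgG hlt hc.le hG

theorem adjusted_criterion_eq (π p11 p12 p22 t1 t2 : ℝ) :
    ((t1 - π) * (t2 - (1 - π)) / (t1 + t2 - 1) ^ 2) *
        ((p22 - p12)
          + (p11 - 2 * p12 + p22) * (t1 * (t1 + t2 - 1) - (t1 + t2) / 2)
          + (1 / 2) * (p11 - p22) * (t1 + t2)) =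
      (t1 - π) * (t2 - (1 - π)) / ((t1 - π) + (t2 - (1 - π))) *
        ((p11 - 2 * p12 + p22) * t1 + p12 - p22) := by
  have hs : (t1 - π) + (t2 - (1 - π)) = t1 + t2 - 1 := by ring
  rw [hs]
  rcases eq_or_ne (t1 + t2 - 1) 0 with h0 | h0
  · simp [h0]
  · field_simp
    ring

section AdjustedCriterion

variable {π p11 p12 p22 t1 t2 : ℝ}

theorem adjusted_criterion_lt_of_mem_upper (hπ : 0 < π) (hπ1 : π < 1) (hK : p12 < p11)
    (hA : 0 < p11 - 2 * p12 + p22) (ht1 : t1 ∈ Set.Icc π 1) (ht2 : t2 ∈ Set.Icc (1 - π) 1)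
    (hs : t1 + t2 ≠ 1) (hne : (t1, t2) ≠ (1, 1)) :
    (t1 - π) * (t2 - (1 - π)) / ((t1 - π) + (t2 - (1 - π))) *
        ((p11 - 2 * p12 + p22) * t1 + p12 - p22) < π * (1 - π) * (p11 - p12) := by
  obtain ⟨ht1π, ht11⟩ := ht1
  obtain ⟨ht2π, ht21⟩ := ht2
  have hab : 0 < (t1 - π) + (t2 - (1 - π)) :=
    lt_of_le_of_ne (by linarith) fun h ↦ hs (by linarith)
  have hG : (1 - π) * π / ((1 - π) + π) = π * (1 - π) := by
    rw [sub_add_cancel, div_one, mul_comm]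
  have hc : (p11 - 2 * p12 + p22) * t1 + p12 - p22 ≤ p11 - p12 := by nlinarith
  rw [← hG]
  refine mul_lt_mul_of_le_of_le_of_lt_or_lt
    (div_nonneg (mul_nonneg (by linarith) (by linarith)) hab.le)
    (mul_div_add_le_mul_div_add (by linarith) (by linarith) (by linarith) (by linarith) hab)
    hc (by rw [hG]; nlinarith) (by linarith) ?_
  rcases eq_or_lt_of_le ht11 with rfl | ht1
  · have ht2 : t2 < 1 := lt_of_le_of_ne ht21 fun h ↦ hne (by rw [h])
    exact Or.inl (mul_div_add_lt_mul_div_add (by linarith) (by linarith) (by linarith)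
      le_rfl (by linarith) hab)
  · exact Or.inr (by nlinarith)

theorem adjusted_criterion_lt_of_mem_lower (hπ : 0 < π) (hπ1 : π < 1) (hK : p22 < p11)
    (hA : 0 < p11 - 2 * p12 + p22) (ht1 : t1 ∈ Set.Icc 0 π) (ht2 : t2 ∈ Set.Icc 0 (1 - π))
    (hs : t1 + t2 ≠ 1) :
    (t1 - π) * (t2 - (1 - π)) / ((t1 - π) + (t2 - (1 - π))) *
        ((p11 - 2 * p12 + p22) * t1 + p12 - p22) < π * (1 - π) * (p11 - p12) := by
  obtain ⟨ht10, ht1π⟩ := ht1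
  obtain ⟨ht20, ht2π⟩ := ht2
  have hab : 0 < (π - t1) + ((1 - π) - t2) :=
    lt_of_le_of_ne (by linarith) fun h ↦ hs (by linarith)
  have hflip : (t1 - π) * (t2 - (1 - π)) / ((t1 - π) + (t2 - (1 - π))) *
      ((p11 - 2 * p12 + p22) * t1 + p12 - p22) =
      (π - t1) * ((1 - π) - t2) / ((π - t1) + ((1 - π) - t2)) *
        (-((p11 - 2 * p12 + p22) * t1 + p12 - p22)) := by
    rw [show (t1 - π) + (t2 - (1 - π)) = -((π - t1) + ((1 - π) - t2)) by ring, div_neg]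
    ring
  have hG : π * (1 - π) / (π + (1 - π)) = π * (1 - π) := by
    rw [add_sub_cancel, div_one]
  have hc : -((p11 - 2 * p12 + p22) * t1 + p12 - p22) ≤ p11 - p12 := by nlinarith
  rw [hflip, ← hG]
  exact mul_lt_mul_of_le_of_le_of_lt_or_lt
    (div_nonneg (mul_nonneg (by linarith) (by linarith)) hab.le)
    (mul_div_add_le_mul_div_add (by linarith) (by linarith) (by linarith) (by linarith) hab)
    hc (by rw [hG]; nlinarith) (by linarith) (Or.inr (by nlinarith))

end AdjustedCriterion

/-- The population version of the adjusted criterion is strictly below its value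
π(1-π)(p11-p12) at (1,1), on the feasible region off the line t1+t2 = 1. -/
theorem stmt_8 (π p11 p12 p22 : ℝ)
    (hπ : 0 < π) (hπ1 : π < 1)
    (h1 : p11 > p12) (h2 : p11 > p22) (h3 : p11 + p22 > 2 * p12)
    (h : ℝ → ℝ → ℝ)
    (hh : ∀ t1 t2, h t1 t2 =
      ((t1 - π) * (t2 - (1 - π)) / (t1 + t2 - 1) ^ 2) *
        ((p22 - p12)
          + (p11 - 2 * p12 + p22) * (t1 * (t1 + t2 - 1) - (t1 + t2) / 2)
          + (1 / 2) * (p11 - p22) * (t1 + t2))) :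
    h 1 1 = π * (1 - π) * (p11 - p12) ∧
    ∀ t1 t2 : ℝ,
      ((t1 ∈ Set.Icc (0:ℝ) π ∧ t2 ∈ Set.Icc (0:ℝ) (1 - π)) ∨
        (t1 ∈ Set.Icc π 1 ∧ t2 ∈ Set.Icc (1 - π) 1)) →
      t1 + t2 ≠ 1 →
      (t1, t2) ≠ ((1:ℝ), (1:ℝ)) →
      h t1 t2 < π * (1 - π) * (p11 - p12) := by
  have hA : 0 < p11 - 2 * p12 + p22 := by linarith
  refine ⟨by rw [hh]; ring, fun t1 t2 hmem hs hne ↦ ?_⟩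
  rw [hh, adjusted_criterion_eq]
  rcases hmem with ⟨ht1, ht2⟩ | ⟨ht1, ht2⟩
  · exact adjusted_criterion_lt_of_mem_lower hπ hπ1 h2 hA ht1 ht2 hs
  · exact adjusted_criterion_lt_of_mem_upper hπ hπ1 h1 hA ht1 ht2 hs hne
end

section
/- Let A be the adjacency matrix of a graph on n vertices that is a disjoint union of a clique on a set C of size k (2 ≤ k ≤ n−1) and n−k isolated vertices. Then S = C is the unique maximizer over nonempty proper subsets S of the criterion W(S) = O(S)/|S|² − B(S)/(|S||S^c|), with W(C) = (k−1)/k. -/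
/-!
With `a = |S ∩ C|`, `s = |S|`, `t = |Sᶜ|` one has `O(S) = a² - a` and `B(S) = a (k - a)`, so
`W(S) = (a² - a)/s² - a(k - a)/(st)`. For `1 ≤ a`, dropping the nonnegative boundary term and
using `a ≤ s` gives `W(S) ≤ (a - 1)/a ≤ (k - 1)/k`. Equality forces the boundary term to vanish,
hence `a = k` (`a = 0` gives `W(S) ≤ 0`), and then `s = k`, i.e. `S = C`.
-/

open Finset

section Clique

variable {α : Type*} [DecidableEq α]

def cliqueAdj (C : Finset α) (i j : α) : ℝ := if i ≠ j ∧ i ∈ C ∧ j ∈ C then 1 else 0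

lemma cliqueAdj_eq (C : Finset α) (i j : α) :
    cliqueAdj C i j = (if i ∈ C then 1 else 0) * (if j ∈ C then 1 else 0)
      - if i = j then (if i ∈ C then 1 else 0) else 0 := by
  unfold cliqueAdj
  split_ifs <;> simp_all

lemma sum_sum_cliqueAdj (C S T : Finset α) :
    ∑ i ∈ S, ∑ j ∈ T, cliqueAdj C i j = #(S ∩ C) * #(T ∩ C) - #(S ∩ T ∩ C) := by
  simp only [cliqueAdj_eq, sum_sub_distrib, ← mul_sum, ← sum_mul, sum_ite_eq, sum_boole]
  simp [filter_mem_eq_inter]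

lemma sum_sum_cliqueAdj_self (C S : Finset α) :
    ∑ i ∈ S, ∑ j ∈ S, cliqueAdj C i j = (#(S ∩ C) : ℝ) ^ 2 - #(S ∩ C) := by
  rw [sum_sum_cliqueAdj, inter_self, sq]

lemma sum_sum_cliqueAdj_compl [Fintype α] (C S : Finset α) :
    ∑ i ∈ S, ∑ j ∈ Sᶜ, cliqueAdj C i j = (#(S ∩ C) : ℝ) * (#C - #(S ∩ C)) := by
  have hsplit : #(Sᶜ ∩ C) + #(S ∩ C) = #C := by
    rw [inter_comm, ← sdiff_eq_inter_compl, inter_comm, card_sdiff_add_card_inter]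
  rw [sum_sum_cliqueAdj, inter_compl, empty_inter, card_empty, Nat.cast_zero, sub_zero,
    ← hsplit, Nat.cast_add, add_sub_cancel_right]

lemma eq_of_card_inter_eq_of_card_eq {S C : Finset α} (hSC : #(S ∩ C) = #C) (hS : #S = #C) :
    S = C := by
  have hCS : C ⊆ S := inter_eq_right.mp (eq_of_subset_of_card_le inter_subset_right hSC.ge)
  exact (eq_of_subset_of_card_le hCS hS.le).symm

end Clique

section Criterion

noncomputable def cliqueCriterion (K a s t : ℝ) : ℝ :=
  (a ^ 2 - a) / s ^ 2 - a * (K - a) / (s * t)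

lemma cliqueCriterion_self (K t : ℝ) : cliqueCriterion K K K t = (K - 1) / K := by
  rcases eq_or_ne K 0 with rfl | hK
  · simp [cliqueCriterion]
  · simp only [cliqueCriterion, sub_self, mul_zero, zero_div, sub_zero]
    field_simp

variable {K a s t : ℝ}

lemma sq_sub_self_div_sq_le (ha : 1 ≤ a) (has : a ≤ s) (haK : a ≤ K) :
    (a ^ 2 - a) / s ^ 2 ≤ (K - 1) / K := calc
  (a ^ 2 - a) / s ^ 2 ≤ (a ^ 2 - a) / a ^ 2 :=
    div_le_div_of_nonneg_left (by nlinarith) (by positivity) (by gcongr)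
  _ = 1 - 1 / a := by field_simp
  _ ≤ 1 - 1 / K := by gcongr
  _ = (K - 1) / K := by rw [one_sub_div (by linarith)]

lemma cliqueCriterion_lt (hK : 2 ≤ K) (ha : 0 ≤ a) (has : a ≤ s) (haK : a ≤ K) (ht : 0 < t)
    (hne : a ≠ K ∨ s ≠ K) : cliqueCriterion K a s t < (K - 1) / K := by
  have hpos : 0 < (K - 1) / K := div_pos (by linarith) (by linarith)
  rcases lt_or_ge a 1 with ha1 | ha1
  · have hB : 0 ≤ a * (K - a) / (s * t) :=
      div_nonneg (mul_nonneg ha (by linarith)) (by nlinarith)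
    have hO : (a ^ 2 - a) / s ^ 2 ≤ 0 :=
      div_nonpos_of_nonpos_of_nonneg (by nlinarith) (by positivity)
    unfold cliqueCriterion
    linarith
  rcases haK.lt_or_eq with haK' | rfl
  · have hB : 0 < a * (K - a) / (s * t) :=
      div_pos (mul_pos (by linarith) (by linarith)) (mul_pos (by linarith) ht)
    unfold cliqueCriterion
    linarith [sq_sub_self_div_sq_le ha1 has haK]
  · have has' : a < s := has.lt_of_ne (by simpa [eq_comm] using hne)
    calc cliqueCriterion a a s t = (a ^ 2 - a) / s ^ 2 := by simp [cliqueCriterion]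
      _ < (a ^ 2 - a) / a ^ 2 :=
        div_lt_div_of_pos_left (by nlinarith) (by positivity) (by gcongr)
      _ = (a - 1) / a := by field_simp

end Criterion

theorem stmt_12_general (n k : ℕ) (C : Finset (Fin n)) (hk : C.card = k)
    (hk2 : 2 ≤ k)
    (A : Fin n → Fin n → ℝ)
    (hA : ∀ i j, A i j = if i ≠ j ∧ i ∈ C ∧ j ∈ C then 1 else 0)
    (W : Finset (Fin n) → ℝ)
    (hW : ∀ S, W S = (∑ i ∈ S, ∑ j ∈ S, A i j) / (S.card : ℝ) ^ 2
      - (∑ i ∈ S, ∑ j ∈ Sᶜ, A i j) / ((S.card : ℝ) * (Sᶜ.card : ℝ))) :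
    W C = ((k : ℝ) - 1) / k ∧
    (∀ S : Finset (Fin n), S.Nonempty → Sᶜ.Nonempty → W S ≤ W C) ∧
    (∀ S : Finset (Fin n), S.Nonempty → Sᶜ.Nonempty → W S = W C → S = C) := by
  obtain rfl : A = cliqueAdj C := funext fun i => funext (hA i)
  have hWS (S : Finset (Fin n)) : W S = cliqueCriterion k #(S ∩ C) #S #Sᶜ := by
    rw [hW, sum_sum_cliqueAdj_self, sum_sum_cliqueAdj_compl, hk, cliqueCriterion]
  have hWC : W C = ((k : ℝ) - 1) / k := by
    rw [hWS, inter_self, hk, cliqueCriterion_self]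
  have hlt (S : Finset (Fin n)) (hSc : Sᶜ.Nonempty) (hSC : S ≠ C) : W S < W C := by
    rw [hWC, hWS]
    refine cliqueCriterion_lt (by exact_mod_cast hk2) (Nat.cast_nonneg _)
      (by exact_mod_cast card_le_card inter_subset_left)
      (by exact_mod_cast hk ▸ card_le_card inter_subset_right)
      (by exact_mod_cast hSc.card_pos) ?_
    contrapose! hSC
    exact eq_of_card_inter_eq_of_card_eq (by exact_mod_cast hk ▸ hSC.1)
      (by exact_mod_cast hk ▸ hSC.2)
  refine ⟨hWC, fun S _ hSc => ?_, fun S _ hSc hEq => ?_⟩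
  · rcases eq_or_ne S C with rfl | hSC
    · exact le_rfl
    · exact (hlt S hSc hSC).le
  · by_contra hSC
    exact (hlt S hSc hSC).ne hEq

/-- For a clique C of size k (2 ≤ k ≤ n-1) plus isolated vertices, C is the unique
maximizer of W over nonempty proper subsets, with W(C) = (k-1)/k. -/
theorem stmt_12 (n k : ℕ) (C : Finset (Fin n)) (hk : C.card = k)
    (hk2 : 2 ≤ k) (hkn : k ≤ n - 1)
    (A : Fin n → Fin n → ℝ)
    (hA : ∀ i j, A i j = if i ≠ j ∧ i ∈ C ∧ j ∈ C then 1 else 0)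
    (W : Finset (Fin n) → ℝ)
    (hW : ∀ S, W S = (∑ i ∈ S, ∑ j ∈ S, A i j) / (S.card : ℝ) ^ 2
      - (∑ i ∈ S, ∑ j ∈ Sᶜ, A i j) / ((S.card : ℝ) * (Sᶜ.card : ℝ))) :
    W C = ((k : ℝ) - 1) / k ∧
    (∀ S : Finset (Fin n), S.Nonempty → Sᶜ.Nonempty → W S ≤ W C) ∧
    (∀ S : Finset (Fin n), S.Nonempty → Sᶜ.Nonempty → W S = W C → S = C) :=
  stmt_12_general n k C hk hk2 A hA W hW
end

section
/- Let R be a 2×2 matrix with nonnegative entries and column sums (π, 1−π) for π ∈ (0,1), with positive row sums, and let t1 = r11/(r11+r12), t2 = r22/(r21+r22). Then (t1 − π)(t1 + t2 − 1) ≥ 0 and (t2 − (1−π))(t1 + t2 − 1) ≥ 0. -/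
/-- The feasible region for (t1,t2): (t1-π) and (t2-(1-π)) have the same sign
as (t1+t2-1). -/
theorem stmt_17 (π r11 r12 r21 r22 : ℝ)
    (hπ : 0 < π) (hπ1 : π < 1)
    (h11 : 0 ≤ r11) (h12 : 0 ≤ r12) (h21 : 0 ≤ r21) (h22 : 0 ≤ r22)
    (hc1 : r11 + r21 = π) (hc2 : r12 + r22 = 1 - π)
    (hr1 : 0 < r11 + r12) (hr2 : 0 < r21 + r22) :
    (r11 / (r11 + r12) - π) *
        (r11 / (r11 + r12) + r22 / (r21 + r22) - 1) ≥ 0 ∧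
    (r22 / (r21 + r22) - (1 - π)) *
        (r11 / (r11 + r12) + r22 / (r21 + r22) - 1) ≥ 0 := by
  have hs : r11 + r12 + (r21 + r22) = 1 := by linarith
  have e1 : r11 / (r11 + r12) - π = (r11 * r22 - r12 * r21) / (r11 + r12) := by
    field_simp
    subst hc1; linear_combination -r11 * hc2
  have e2 : r22 / (r21 + r22) - (1 - π) = (r11 * r22 - r12 * r21) / (r21 + r22) := by
    field_simp
    linear_combination -r22 * hc1 + r21 * hc2
  have e3 : r11 / (r11 + r12) + r22 / (r21 + r22) - 1 =
      (r11 * r22 - r12 * r21) / ((r11 + r12) * (r21 + r22)) := by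
    field_simp
    ring
  rw [e1, e2, e3]
  constructor <;>
  · rw [div_mul_div_comm, ← sq]
    positivity
end
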